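/- Let n ≥ 1 and h = (h_1,…,h_n) ∈ ℝⁿ with h_j > 0 for each j. For ξ ∈ ℤⁿ define u_ξ(x) = exp(Σ_{j=1}^n x_j·ln h_j)·e^{2πi x·ξ} and v_ξ(x) = exp(−Σ_{j=1}^n x_j·ln h_j)·e^{2πi x·ξ} for x ∈ ℝⁿ. Then: (i) Σ_{j=1}^n ∂²u_ξ/∂x_j²(x) = λ_ξ·u_ξ(x) for all x ∈ ℝⁿ, where λ_ξ = Σ_{j=1}^n (ln h_j + 2πi ξ_j)²; (ii) for every j and every x with x_j = 0, writing x′ for the point obtained from x by replacing x_j by 1, one has h_j·u_ξ(x) = u_ξ(x′) and h_j·(∂u_ξ/∂x_j)(x) = (∂u_ξ/∂x_j)(x′); (iii) ∫_{(0,1)^n} u_ξ(x)·conj(v_η(x)) dx = 1 if ξ = η and 0 if ξ ≠ η, for all ξ, η ∈ ℤⁿ. -/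

import Mathlib

/-! Both `u_ξ` and `u_ξ · conj v_η` are exponentials of linear forms `x ↦ exp (∑ x_j c_j)`.
Along the `j`-th coordinate such a function is `t ↦ exp (t c_j) · const`, so it is an
eigenfunction of `∂_j` with eigenvalue `c_j`; for `u_ξ` one has `exp c_j = h_j`, which is the
boundary condition. The exponential of a linear form factors over the coordinates, so the
integral over the unit cube is a product of the one-dimensional integrals
`∫₀¹ exp (2π i m t) dt = δ_{m,0}`. -/

open Complex MeasureTheory Set

noncomputable section

/-- `u_ξ(x) = h^x e^{2π i x·ξ}` on `ℝⁿ`, where `h^x = exp(Σ x_j log h_j)`. -/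
def uN {n : ℕ} (h : Fin n → ℝ) (ξ : Fin n → ℤ) (x : Fin n → ℝ) : ℂ :=
  Complex.exp (∑ j, (x j : ℂ) * (Real.log (h j) : ℂ)) *
    Complex.exp (2 * Real.pi * Complex.I * ∑ j, (x j : ℂ) * (ξ j : ℂ))

/-- `v_ξ(x) = h^{-x} e^{2π i x·ξ}` on `ℝⁿ`. -/
def vN {n : ℕ} (h : Fin n → ℝ) (ξ : Fin n → ℤ) (x : Fin n → ℝ) : ℂ :=
  Complex.exp (-∑ j, (x j : ℂ) * (Real.log (h j) : ℂ)) *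
    Complex.exp (2 * Real.pi * Complex.I * ∑ j, (x j : ℂ) * (ξ j : ℂ))

section ExpLinear

variable {ι : Type*} [Fintype ι] [DecidableEq ι]

def cexpLinear (c : ι → ℂ) (x : ι → ℝ) : ℂ :=
  cexp (∑ i, (x i : ℂ) * c i)

lemma cexpLinear_update (c : ι → ℂ) (x : ι → ℝ) (j : ι) (t : ℝ) :
    cexpLinear c (Function.update x j t) = cexp ((t - x j) * c j) * cexpLinear c x := by
  have hsum : ∑ i, (Function.update x j t i : ℂ) * c i =
      (t - x j) * c j + ∑ i, (x i : ℂ) * c i := by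
    rw [← Finset.add_sum_erase _ _ (Finset.mem_univ j),
      ← Finset.add_sum_erase _ (fun i ↦ (x i : ℂ) * c i) (Finset.mem_univ j),
      Finset.sum_congr rfl fun i hi ↦ by rw [Function.update_of_ne (Finset.ne_of_mem_erase hi)],
      Function.update_self]
    ring
  rw [cexpLinear, cexpLinear, hsum, Complex.exp_add]

lemma hasDerivAt_cexpLinear_update (c : ι → ℂ) (x : ι → ℝ) (j : ι) (t : ℝ) :
    HasDerivAt (fun s : ℝ ↦ cexpLinear c (Function.update x j s))
      (c j * cexpLinear c (Function.update x j t)) t := by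
  have hlin : HasDerivAt (fun s : ℝ ↦ ((s : ℂ) - x j) * c j) (c j) t := by
    simpa using ((hasDerivAt_id t).ofReal_comp.sub_const (x j : ℂ)).mul_const (c j)
  simp only [cexpLinear_update]
  exact (hlin.cexp.mul_const (cexpLinear c x)).congr_deriv (by ring)

lemma deriv_cexpLinear_update (c : ι → ℂ) (x : ι → ℝ) (j : ι) :
    deriv (fun s : ℝ ↦ cexpLinear c (Function.update x j s)) =
      fun t ↦ c j * cexpLinear c (Function.update x j t) :=
  funext fun t ↦ (hasDerivAt_cexpLinear_update c x j t).deriv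

lemma iteratedDeriv_two_cexpLinear_update (c : ι → ℂ) (x : ι → ℝ) (j : ι) :
    iteratedDeriv 2 (fun s : ℝ ↦ cexpLinear c (Function.update x j s)) (x j) =
      c j ^ 2 * cexpLinear c x := by
  rw [iteratedDeriv_succ, iteratedDeriv_one, deriv_cexpLinear_update,
    ((hasDerivAt_cexpLinear_update c x j (x j)).const_mul (c j)).deriv, Function.update_eq_self]
  ring

lemma cexpLinear_update_one_of_eq_zero (c : ι → ℂ) {x : ι → ℝ} {j : ι} (hx : x j = 0) :
    cexpLinear c (Function.update x j 1) = cexp (c j) * cexpLinear c x := by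
  rw [cexpLinear_update, hx]
  simp

omit [DecidableEq ι] in
lemma cexpLinear_eq_prod (c : ι → ℂ) (x : ι → ℝ) :
    cexpLinear c x = ∏ i, cexp (x i * c i) :=
  Complex.exp_sum _ _

end ExpLinear

lemma setIntegral_univ_pi_prod {ι : Type*} [Fintype ι] (f : ι → ℝ → ℂ) (s : ι → Set ℝ) :
    ∫ x in univ.pi s, ∏ i, f i (x i) = ∏ i, ∫ t in s i, f i t := by
  rw [volume_pi, Measure.restrict_pi_pi, integral_fintype_prod_eq_prod]

lemma integral_Ioo_cexp_two_pi_I_int_mul (m : ℤ) :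
    ∫ t in Ioo (0 : ℝ) 1, cexp (t * (2 * Real.pi * I * m)) = if m = 0 then 1 else 0 := by
  split_ifs with hm
  · simp [hm]
  have hc : (2 * Real.pi * I * m : ℂ) ≠ 0 := by simp [Real.pi_ne_zero, hm]
  rw [← integral_Ioc_eq_integral_Ioo, ← intervalIntegral.integral_of_le zero_le_one]
  simp_rw [mul_comm _ (2 * Real.pi * I * m : ℂ)]
  rw [integral_exp_mul_complex hc, ofReal_one, ofReal_zero, mul_one, mul_zero, Complex.exp_zero,
    show (2 * Real.pi * I * m : ℂ) = m * (2 * Real.pi * I) by ring, exp_int_mul_two_pi_mul_I,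
    sub_self, zero_div]

section UV

variable {n : ℕ} (h : Fin n → ℝ)

lemma uN_eq_cexpLinear (ξ : Fin n → ℤ) :
    uN h ξ = cexpLinear fun j ↦ (Real.log (h j) : ℂ) + 2 * Real.pi * I * ξ j := by
  funext x
  rw [uN, cexpLinear, ← Complex.exp_add, Finset.mul_sum, ← Finset.sum_add_distrib]
  congr 1
  exact Finset.sum_congr rfl fun j _ ↦ by ring

lemma exp_log_add_two_pi_I_int_mul {a : ℝ} (ha : 0 < a) (m : ℤ) :
    cexp ((Real.log a : ℂ) + 2 * Real.pi * I * m) = a := by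
  rw [Complex.exp_add, mul_comm _ (m : ℂ), exp_int_mul_two_pi_mul_I, mul_one,
    ← ofReal_exp, Real.exp_log ha]

lemma uN_mul_conj_vN (ξ η : Fin n → ℤ) (x : Fin n → ℝ) :
    uN h ξ x * (starRingEnd ℂ) (vN h η x) =
      ∏ j, cexp (x j * (2 * Real.pi * I * (ξ j - η j : ℤ))) := by
  rw [← cexpLinear_eq_prod, cexpLinear, uN, vN, map_mul, ← Complex.exp_conj, ← Complex.exp_conj]
  simp only [map_neg, map_sum, map_mul, conj_ofReal, conj_I, map_intCast, map_ofNat]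
  rw [← Complex.exp_add, ← Complex.exp_add, ← Complex.exp_add]
  congr 1
  simp only [Finset.mul_sum, ← Finset.sum_neg_distrib, ← Finset.sum_add_distrib]
  exact Finset.sum_congr rfl fun j _ ↦ by push_cast; ring

end UV

theorem stmt_5_general (n : ℕ) (h : Fin n → ℝ) (hh : ∀ j, 0 < h j) :
    (∀ (ξ : Fin n → ℤ) (x : Fin n → ℝ),
      (∑ j, iteratedDeriv 2 (fun t : ℝ => uN h ξ (Function.update x j t)) (x j)) =
        (∑ j, ((Real.log (h j) : ℂ) + 2 * Real.pi * Complex.I * (ξ j : ℂ)) ^ 2) *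
          uN h ξ x) ∧
    (∀ (ξ : Fin n → ℤ) (j : Fin n) (x : Fin n → ℝ), x j = 0 →
      ((h j : ℂ) * uN h ξ x = uN h ξ (Function.update x j 1)) ∧
      ((h j : ℂ) * deriv (fun t : ℝ => uN h ξ (Function.update x j t)) (x j) =
        deriv (fun t : ℝ => uN h ξ (Function.update x j t)) 1)) ∧
    (∀ ξ η : Fin n → ℤ,
      (∫ x in Set.univ.pi fun _ : Fin n => Set.Ioo (0:ℝ) 1,
        uN h ξ x * (starRingEnd ℂ) (vN h η x)) = if ξ = η then 1 else 0) := by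
  refine ⟨fun ξ x ↦ ?_, fun ξ j x hx ↦ ?_, fun ξ η ↦ ?_⟩
  · simp only [uN_eq_cexpLinear, iteratedDeriv_two_cexpLinear_update, Finset.sum_mul]
  · have hvalue : (h j : ℂ) * uN h ξ x = uN h ξ (Function.update x j 1) := by
      rw [uN_eq_cexpLinear, cexpLinear_update_one_of_eq_zero _ hx,
        exp_log_add_two_pi_I_int_mul (hh j)]
    refine ⟨hvalue, ?_⟩
    simp only [uN_eq_cexpLinear, deriv_cexpLinear_update, Function.update_eq_self] at hvalue ⊢
    rw [mul_left_comm, hvalue]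
  · simp only [uN_mul_conj_vN]
    rw [setIntegral_univ_pi_prod (fun j t ↦ cexp (t * (2 * Real.pi * I * (ξ j - η j : ℤ))))]
    simp only [integral_Ioo_cexp_two_pi_I_int_mul,
      sub_eq_zero, Finset.prod_boole, Finset.mem_univ, forall_const, funext_iff]

theorem stmt_5 (n : ℕ) (hn : 1 ≤ n) (h : Fin n → ℝ) (hh : ∀ j, 0 < h j) :
    (∀ (ξ : Fin n → ℤ) (x : Fin n → ℝ),
      (∑ j, iteratedDeriv 2 (fun t : ℝ => uN h ξ (Function.update x j t)) (x j)) =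
        (∑ j, ((Real.log (h j) : ℂ) + 2 * Real.pi * Complex.I * (ξ j : ℂ)) ^ 2) *
          uN h ξ x) ∧
    (∀ (ξ : Fin n → ℤ) (j : Fin n) (x : Fin n → ℝ), x j = 0 →
      ((h j : ℂ) * uN h ξ x = uN h ξ (Function.update x j 1)) ∧
      ((h j : ℂ) * deriv (fun t : ℝ => uN h ξ (Function.update x j t)) (x j) =
        deriv (fun t : ℝ => uN h ξ (Function.update x j t)) 1)) ∧
    (∀ ξ η : Fin n → ℤ,
      (∫ x in Set.univ.pi fun _ : Fin n => Set.Ioo (0:ℝ) 1,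
        uN h ξ x * (starRingEnd ℂ) (vN h η x)) = if ξ = η then 1 else 0) :=
  stmt_5_general n h hh
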